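/- arXiv:2507.01917 — 2 statements merged into one kernel-verified Lean document; each statement's English description precedes it below -/
import Mathlib

section
/- Under the abstract Galerkin setting, if additionally a is positive semidefinite (a(v, v) ≥ 0 for all v ∈ V), then the discrete load functional is bounded above by the exact load functional: l(u_h) ≤ l(u). -/
/-- In the abstract Galerkin setting, if `a` is positive semidefinite then the
discrete load functional is bounded above by the exact one: `l(u_h) ≤ l(u)`. -/
theorem discrete_load_le_exact_load
    {V : Type*} [AddCommGroup V] [Module ℝ V]
    (a : V →ₗ[ℝ] V →ₗ[ℝ] ℝ) (l : V →ₗ[ℝ] ℝ)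
    (hsymm : ∀ v w : V, a v w = a w v)
    (hpos : ∀ v : V, 0 ≤ a v v)
    (Uh : Submodule ℝ V)
    (u : V) (hu : ∀ v : V, a u v = l v)
    (uh : V) (huh_mem : uh ∈ Uh) (huh : ∀ vh ∈ Uh, a uh vh = l vh) :
    l uh ≤ l u := by
  have h1 : a u u = l u := hu u
  have h2 : a uh uh = l uh := huh uh huh_mem
  have h3 : a u uh = l uh := hu uh
  have h4 := hpos (u - uh)
  have e : a (u - uh) (u - uh) = a u u - a u uh - (a uh u - a uh uh) := by
    simp [map_sub]; ring
  rw [e, hsymm uh u] at h4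
  linarith
end

section
/- Automatic differentiation of multivariate polynomials with dual numbers (the general principle of Section 6): let p be a real polynomial in n variables, and let x, x' : Fin n → ℝ. Evaluating p at the dual-number arguments x̂ᵢ = inl(xᵢ) + xᵢ' · ε in the dual numbers over ℝ yields p(x̂) = inl(p(x)) + (Σᵢ xᵢ' · (∂p/∂xᵢ)(x)) · ε; i.e., the primal part is the value p(x) and the dual part is the directional derivative Σᵢ xᵢ' ∂p/∂xᵢ evaluated at x. -/
open TrivSqZeroExt

/-- **Automatic differentiation of multivariate polynomials with dual numbers**
(Section 6): evaluating a polynomial `p` at the dual arguments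
`x̂ᵢ = inl(xᵢ) + xᵢ'·ε` yields primal part `p(x)` and dual part
`Σᵢ xᵢ' · (∂p/∂xᵢ)(x)`. -/
theorem dual_number_autodiff_mvpolynomial
    {n : ℕ} (p : MvPolynomial (Fin n) ℝ) (x x' : Fin n → ℝ) :
    MvPolynomial.aeval
        (fun i => (inl (x i) + inl (x' i) * DualNumber.eps : DualNumber ℝ)) p
      = inl (MvPolynomial.eval x p)
        + inl (∑ i, x' i * MvPolynomial.eval x (MvPolynomial.pderiv i p))
          * DualNumber.eps := by
  induction p using MvPolynomial.induction_on with
  | C a =>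
      simp [TrivSqZeroExt.algebraMap_eq_inl']
  | add p q hp hq =>
      simp only [map_add, hp, hq, MvPolynomial.eval_add, Finset.sum_add_distrib, mul_add,
        inl_add]
      ring
  | mul_X p i hp =>
      simp only [map_mul, hp, MvPolynomial.aeval_X, MvPolynomial.eval_mul,
        MvPolynomial.eval_X, MvPolynomial.pderiv_mul, MvPolynomial.pderiv_X,
        MvPolynomial.eval_add, map_add, Pi.single_apply]
      have heps : (DualNumber.eps : DualNumber ℝ) * DualNumber.eps = 0 :=
        DualNumber.eps_mul_eps
      have hsum : ∑ j, x' j * (MvPolynomial.eval x (MvPolynomial.pderiv j p) * x i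
            + MvPolynomial.eval x p * MvPolynomial.eval x
              (if i = j then (1 : MvPolynomial (Fin n) ℝ) else 0))
          = (∑ j, x' j * MvPolynomial.eval x (MvPolynomial.pderiv j p)) * x i
            + x' i * MvPolynomial.eval x p := by
        simp only [mul_add, Finset.sum_add_distrib, Finset.sum_mul, mul_assoc]
        congr 1
        rw [Finset.sum_eq_single i] <;> intros <;> simp_all [mul_comm, eq_comm]
      rw [hsum]
      simp only [inl_add, inl_mul]
      have h2 : (DualNumber.eps : DualNumber ℝ) ^ 2 = 0 := by rw [sq, heps]
      ring_nf
      rw [h2]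
      ring
end
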